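/- (Regime 2 increments.) Suppose ρ = 0 and r_2 < α < r_3, where r_2 = 1 + γ/γ_2 and r_3 = r_2 + γ/γ_3. Let ℓ = (1+γ)/(2+γ) and let f(x) = r_2 + ℓ·(α − x), with f^0(x) = x and f^{j+1} = f ∘ f^j. Then in the limiting dynamical system the hitting times t_j satisfy: t_1 = 2 − α, t_2 − t_1 = γ/γ_2, and for every j ≥ 3, t_j − t_{j−1} = (α − f^{j−3}(r_2)) + (1 − (3 + 3γ + γ²)·(α − f^{j−3}(r_2)))/(2+γ). Moreover, as j → ∞ these increments converge to β_∞ = (α − r*) + (1 − (3 + 3γ + γ²)·(α − r*))/(2+γ), where r* = (r_2 + ℓ·α)/(1 + ℓ). -/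

import Mathlib

namespace SelectiveSweeps

noncomputable section

/-- `γ_j = (1+γ)^j − 1` for `j ∈ ℤ`. -/
def gam (γ : ℝ) (j : ℤ) : ℝ := (1 + γ) ^ j - 1

/-- `λ_j = (1+ρ)(1+γ)^j − 1` for `j ∈ ℤ`. -/
def lam (γ ρ : ℝ) (j : ℤ) : ℝ := (1 + ρ) * (1 + γ) ^ j - 1

/-- A state of the recursion: the time `s_n` together with the values `y_j(s_n)`, `j ∈ ℕ`. -/
structure St where
  s : ℝ
  y : ℕ → ℝ

/-- `α_n = α + ρ s_n / γ`. -/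
def alphaOf (γ ρ α : ℝ) (σ : St) : ℝ := α + ρ * σ.s / γ

/-- `m_n = max {j : y_j(s_n) = α_n}`. -/
def mOf (γ ρ α : ℝ) (σ : St) : ℕ := sSup {j : ℕ | σ.y j = alphaOf γ ρ α σ}

/-- `k_n = max {j : y_j(s_n) > 0}`. -/
def kOf (σ : St) : ℕ := sSup {j : ℕ | 0 < σ.y j}

/-- `k_n^* = k_n` if `y_{k_n}(s_n) < 1`, and `k_n + 1` if `y_{k_n}(s_n) = 1`. -/
def kstarOf (σ : St) : ℕ := if σ.y (kOf σ) < 1 then kOf σ else kOf σ + 1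

/-- `δ_{n,j}`:  `(α_n − y_j(s_n))·γ/(λ_{j−m_n} − ρ)` for `m_n < j < k_n^*` and
`(1 − y_{k_n^*}(s_n))·γ/λ_{k_n^*−m_n}` for `j = k_n^*`. -/
def deltaOf (γ ρ α : ℝ) (σ : St) (j : ℕ) : ℝ :=
  if j = kstarOf σ then
    (1 - σ.y (kstarOf σ)) * γ / lam γ ρ ((kstarOf σ : ℤ) - (mOf γ ρ α σ : ℤ))
  else
    (alphaOf γ ρ α σ - σ.y j) * γ / (lam γ ρ ((j : ℤ) - (mOf γ ρ α σ : ℤ)) - ρ)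

/-- `Δ_n = min {δ_{n,j} : m_n < j ≤ k_n^*}`. -/
def DeltaOf (γ ρ α : ℝ) (σ : St) : ℝ :=
  sInf (deltaOf γ ρ α σ '' Set.Ioc (mOf γ ρ α σ) (kstarOf σ))

/-- One step of the recursion: `s_{n+1} = s_n + Δ_n` and, evaluating
`y_j(s_n + t) = max (y_j(s_n) + t·λ_{j−m_n}/γ) 0` (for `j ≤ k_n^*`; `0` for `j > k_n^*`)
at `t = Δ_n`, the new values `y_j(s_{n+1})`. -/
def step (γ ρ α : ℝ) (σ : St) : St where
  s := σ.s + DeltaOf γ ρ α σ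
  y := fun j =>
    if j ≤ kstarOf σ then
      max (σ.y j + DeltaOf γ ρ α σ * lam γ ρ ((j : ℤ) - (mOf γ ρ α σ : ℤ)) / γ) 0
    else 0

/-- The state after `n` steps: `(state γ ρ α n).s = s_n` and `(state γ ρ α n).y j = y_j(s_n)`.
Initially `s_0 = 0` and `y_j(0) = max (α − j) 0`. -/
def state (γ ρ α : ℝ) (n : ℕ) : St :=
  (step γ ρ α)^[n] ⟨0, fun j => max (α - j) 0⟩

/-- The index `n` of the interval `[s_n, s_{n+1}]` used to evaluate `y_j` at time `t`. -/
def idxAt (γ ρ α : ℝ) (t : ℝ) : ℕ := sInf {n : ℕ | t < (state γ ρ α (n + 1)).s}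

/-- `y_j(t)`, evaluated via the piecewise linear recursion: for `s_n ≤ t ≤ s_{n+1}`,
`y_j(t) = max (y_j(s_n) + (t − s_n)·λ_{j−m_n}/γ) 0` for `j ≤ k_n^*`, and `0` for `j > k_n^*`. -/
def yAt (γ ρ α : ℝ) (j : ℕ) (t : ℝ) : ℝ :=
  let σ := state γ ρ α (idxAt γ ρ α t)
  if j ≤ kstarOf σ then
    max (σ.y j + (t - σ.s) * lam γ ρ ((j : ℤ) - (mOf γ ρ α σ : ℤ)) / γ) 0
  else 0

/-- Conditions (i)–(ii) at a state: (i) the sets defining `m_n` and `k_n` are nonempty and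
bounded, `y_j(s_n) ≤ α_n` for all `j`, and `y_j(s_n) > 0` for `m_n ≤ j ≤ k_n`;
(ii) `y_{j+1}(s_n) ≥ y_j(s_n) − 1` for all `0 ≤ j ≤ k_n`. -/
def Cond (γ ρ α : ℝ) (σ : St) : Prop :=
  {j : ℕ | σ.y j = alphaOf γ ρ α σ}.Nonempty ∧
  BddAbove {j : ℕ | σ.y j = alphaOf γ ρ α σ} ∧
  {j : ℕ | 0 < σ.y j}.Nonempty ∧
  BddAbove {j : ℕ | 0 < σ.y j} ∧
  (∀ j : ℕ, σ.y j ≤ alphaOf γ ρ α σ) ∧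
  (∀ j : ℕ, mOf γ ρ α σ ≤ j → j ≤ kOf σ → 0 < σ.y j) ∧
  (∀ j : ℕ, j ≤ kOf σ → σ.y j - 1 ≤ σ.y (j + 1))

/-- `t_j = inf { t ∈ [0, t*) : y_j(t) = 1 }`, where `t < t* = Σ_n Δ_n = sup_n s_n` is
expressed as `∃ n, t < s_n`. -/
def tHit (γ ρ α : ℝ) (j : ℕ) : ℝ :=
  sInf {t : ℝ | 0 ≤ t ∧ (∃ n : ℕ, t < (state γ ρ α n).s) ∧ yAt γ ρ α j t = 1}


/-!
With `ρ = 0` and `r₂ < α < r₃`, after the first step the profile is a window: `y = α` at one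
site `n`, two further values at `n + 1, n + 2`, and `0` beyond. The dynamics alternate between
two window shapes, `(α, 1 + w (2 + γ), w (3 + 3γ + γ²))` at `s_{2n+1}` and `(α, α - w', 1)` at
`s_{2n+2}`, where `w' = (α - r₂) - ℓ w`, so that `w' = α - f^n(r₂)`; the two step lengths are
`(1 - w (3 + 3γ + γ²)) / (2 + γ)` and `w'`. Site `n + 2` first reaches `1` at `s_{2n+2}`, so
`t_{n+2} = s_{2n+2}` and each increment is one period of the alternation. The deficits follow an
affine recursion with ratio `-ℓ`, `|ℓ| < 1`, hence converge to the fixed point `(α - r₂)/(1 + ℓ)`.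
-/

section Recursion

variable {γ ρ α : ℝ}

lemma state_succ (γ ρ α : ℝ) (n : ℕ) :
    state γ ρ α (n + 1) = step γ ρ α (state γ ρ α n) :=
  Function.iterate_succ_apply' _ _ _

lemma state_s_zero : (state γ ρ α 0).s = 0 := rfl

lemma state_s_succ (n : ℕ) :
    (state γ ρ α (n + 1)).s = (state γ ρ α n).s + DeltaOf γ ρ α (state γ ρ α n) := by
  rw [state_succ]; rfl

lemma step_y_of_le {σ : St} {j : ℕ} (hj : j ≤ kstarOf σ) :
    (step γ ρ α σ).y j =
      max (σ.y j + DeltaOf γ ρ α σ * lam γ ρ ((j : ℤ) - (mOf γ ρ α σ : ℤ)) / γ) 0 :=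
  if_pos hj

lemma step_y_of_lt {σ : St} {j : ℕ} (hj : kstarOf σ < j) : (step γ ρ α σ).y j = 0 :=
  if_neg (not_le.2 hj)

lemma mOf_eq {σ : St} {m : ℕ} (hm : σ.y m = alphaOf γ ρ α σ)
    (hgt : ∀ j, m < j → σ.y j ≠ alphaOf γ ρ α σ) : mOf γ ρ α σ = m :=
  IsGreatest.csSup_eq ⟨hm, fun j hj => not_lt.1 fun h => hgt j h hj⟩

lemma kOf_eq {σ : St} {k : ℕ} (hk : 0 < σ.y k) (hgt : ∀ j, k < j → σ.y j = 0) : kOf σ = k :=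
  IsGreatest.csSup_eq ⟨hk, fun j hj => not_lt.1 fun h => hj.ne' (hgt j h)⟩

lemma kstarOf_eq_of_lt_one {σ : St} {k : ℕ} (hk : 0 < σ.y k) (hk1 : σ.y k < 1)
    (hgt : ∀ j, k < j → σ.y j = 0) : kstarOf σ = k := by
  rw [kstarOf, kOf_eq hk hgt, if_pos hk1]

lemma kstarOf_eq_succ {σ : St} {k : ℕ} (hk : σ.y k = 1) (hgt : ∀ j, k < j → σ.y j = 0) :
    kstarOf σ = k + 1 := by
  rw [kstarOf, kOf_eq (by rw [hk]; exact one_pos) hgt, if_neg (by rw [hk]; exact lt_irrefl 1)]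

lemma le_kstarOf {σ : St} {j : ℕ} (hbdd : BddAbove {j | 0 < σ.y j}) (hj : 0 < σ.y j) :
    j ≤ kstarOf σ := by
  have : j ≤ kOf σ := le_csSup hbdd hj
  unfold kstarOf; split_ifs <;> omega

lemma DeltaOf_eq {v : ℝ} {σ : St} {j₀ : ℕ}
    (hj₀ : j₀ ∈ Set.Ioc (mOf γ ρ α σ) (kstarOf σ)) (hv : deltaOf γ ρ α σ j₀ = v)
    (hle : ∀ j ∈ Set.Ioc (mOf γ ρ α σ) (kstarOf σ), v ≤ deltaOf γ ρ α σ j) :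
    DeltaOf γ ρ α σ = v :=
  IsLeast.csInf_eq ⟨⟨j₀, hj₀, hv⟩, by rintro _ ⟨j, hj, rfl⟩; exact hle j hj⟩

end Recursion

section HittingTimes

variable {γ ρ α : ℝ}

lemma idxAt_spec {N : ℕ} {t : ℝ} (ht : 0 ≤ t) (htN : t < (state γ ρ α N).s) :
    (state γ ρ α (idxAt γ ρ α t)).s ≤ t ∧ t < (state γ ρ α (idxAt γ ρ α t + 1)).s ∧
      idxAt γ ρ α t < N := by
  obtain ⟨N, rfl⟩ : ∃ M, N = M + 1 := Nat.exists_eq_add_one.2 <| Nat.pos_of_ne_zero <| by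
    rintro rfl; exact (not_lt.2 ht) htN
  have hN : N ∈ {n : ℕ | t < (state γ ρ α (n + 1)).s} := htN
  have hmem : idxAt γ ρ α t ∈ {n : ℕ | t < (state γ ρ α (n + 1)).s} := Nat.sInf_mem ⟨N, hN⟩
  refine ⟨?_, hmem, Nat.lt_succ_of_le (Nat.sInf_le hN)⟩
  rcases Nat.eq_zero_or_pos (idxAt γ ρ α t) with h0 | hpos
  · rw [h0]; exact ht
  · have hprev : idxAt γ ρ α t - 1 ∉ {n : ℕ | t < (state γ ρ α (n + 1)).s} :=
      Nat.notMem_of_lt_sInf (Nat.sub_lt hpos one_pos)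
    simpa only [Set.mem_ofPred_eq, not_lt, Nat.sub_add_cancel hpos] using hprev

lemma idxAt_eq (hs : Monotone fun n => (state γ ρ α n).s) {m : ℕ} {t : ℝ}
    (h1 : (state γ ρ α m).s ≤ t) (h2 : t < (state γ ρ α (m + 1)).s) : idxAt γ ρ α t = m := by
  refine le_antisymm (Nat.sInf_le h2) (not_lt.1 fun hlt => ?_)
  have hmem : idxAt γ ρ α t ∈ {n : ℕ | t < (state γ ρ α (n + 1)).s} := Nat.sInf_mem ⟨m, h2⟩
  exact (not_lt.2 h1) (hmem.trans_le (hs hlt))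

lemma yAt_of_idxAt_eq {n j : ℕ} {t : ℝ} (h : idxAt γ ρ α t = n) :
    yAt γ ρ α j t =
      if j ≤ kstarOf (state γ ρ α n) then
        max ((state γ ρ α n).y j + (t - (state γ ρ α n).s) *
          lam γ ρ ((j : ℤ) - (mOf γ ρ α (state γ ρ α n) : ℤ)) / γ) 0
      else 0 := by
  rw [yAt, h]

/-- On `[s_n, s_{n+1}]` the profile `y_j` is the positive part of an affine function. -/
lemma yAt_lt_one {N j : ℕ} {t : ℝ} (ht : 0 ≤ t) (htN : t < (state γ ρ α N).s)
    (hlt : ∀ n < N, (state γ ρ α n).y j < 1) (hN : (state γ ρ α N).y j ≤ 1) :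
    yAt γ ρ α j t < 1 := by
  obtain ⟨h1, h2, hn⟩ := idxAt_spec ht htN
  set n := idxAt γ ρ α t
  have hy : (state γ ρ α n).y j < 1 := hlt n hn
  have hy' : (state γ ρ α (n + 1)).y j ≤ 1 := by
    rcases (show n + 1 ≤ N from hn).lt_or_eq with h | h
    · exact (hlt _ h).le
    · rw [h]; exact hN
  rw [yAt_of_idxAt_eq rfl]
  split_ifs with hj
  · rw [state_succ, step_y_of_le hj] at hy'
    rw [state_s_succ] at h2
    set Δ := DeltaOf γ ρ α (state γ ρ α n)
    set c := lam γ ρ ((j : ℤ) - (mOf γ ρ α (state γ ρ α n) : ℤ)) / γ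
    have hend : (state γ ρ α n).y j + Δ * c ≤ 1 := by
      rw [mul_div_assoc] at hy'; exact (le_max_left _ _).trans hy'
    refine max_lt ?_ one_pos
    rw [mul_div_assoc]
    nlinarith
  · exact one_pos

lemma tHit_eq {N j : ℕ} (hs : StrictMono fun n => (state γ ρ α n).s)
    (hbdd : BddAbove {i | 0 < (state γ ρ α N).y i})
    (hlt : ∀ n < N, (state γ ρ α n).y j < 1) (hN : (state γ ρ α N).y j = 1) :
    tHit γ ρ α j = (state γ ρ α N).s := by
  have hidx : idxAt γ ρ α (state γ ρ α N).s = N :=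
    idxAt_eq hs.monotone le_rfl (hs (Nat.lt_succ_self N))
  have hhit : yAt γ ρ α j (state γ ρ α N).s = 1 := by
    rw [yAt_of_idxAt_eq hidx, if_pos (le_kstarOf hbdd (hN ▸ one_pos)), sub_self, zero_mul,
      zero_div, add_zero, hN, max_eq_left zero_le_one]
  refine IsLeast.csInf_eq ⟨⟨?_, ⟨N + 1, hs (Nat.lt_succ_self N)⟩, hhit⟩, ?_⟩
  · exact (hs.monotone (Nat.zero_le N)).trans' le_rfl
  · rintro t ⟨ht, -, hyt⟩
    exact not_lt.1 fun h => (yAt_lt_one ht h hlt hN.le).ne hyt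

end HittingTimes

def deficit (d ℓ : ℝ) : ℕ → ℝ
  | 0 => 0
  | n + 1 => d - ℓ * deficit d ℓ n

section Deficit

variable {d ℓ : ℝ}

lemma deficit_succ (d ℓ : ℝ) (n : ℕ) : deficit d ℓ (n + 1) = d - ℓ * deficit d ℓ n := rfl

lemma deficit_mem_Icc (hd : 0 ≤ d) (hℓ0 : 0 ≤ ℓ) (hℓ1 : ℓ ≤ 1) (n : ℕ) :
    deficit d ℓ n ∈ Set.Icc 0 d := by
  induction n with
  | zero => exact ⟨le_rfl, hd⟩
  | succ n ih =>
    rw [deficit_succ]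
    constructor <;> nlinarith [ih.1, ih.2]

lemma deficit_succ_pos (hd : 0 < d) (hℓ0 : 0 ≤ ℓ) (hℓ1 : ℓ < 1) (n : ℕ) :
    0 < deficit d ℓ (n + 1) := by
  have := deficit_mem_Icc hd.le hℓ0 hℓ1.le n
  rw [deficit_succ]
  nlinarith [this.1, this.2]

lemma deficit_eq (hℓ : 1 + ℓ ≠ 0) (n : ℕ) :
    deficit d ℓ n = d / (1 + ℓ) * (1 - (-ℓ) ^ n) := by
  induction n with
  | zero => simp [deficit]
  | succ n ih =>
    rw [deficit_succ, ih, pow_succ]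
    field_simp
    ring

lemma tendsto_deficit (hℓ : |ℓ| < 1) :
    Filter.Tendsto (deficit d ℓ) Filter.atTop (nhds (d / (1 + ℓ))) := by
  have hℓ' : 1 + ℓ ≠ 0 := by linarith [neg_abs_le ℓ]
  have hpow := tendsto_pow_atTop_nhds_zero_of_abs_lt_one (show |-ℓ| < 1 by rwa [abs_neg])
  have := (hpow.const_sub 1).const_mul (d / (1 + ℓ))
  rw [sub_zero, mul_one] at this
  exact this.congr fun n => (deficit_eq hℓ' n).symm

lemma sub_iterate_eq_deficit (α r ℓ : ℝ) (n : ℕ) :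
    α - (fun x => r + ℓ * (α - x))^[n] r = deficit (α - r) ℓ (n + 1) := by
  induction n with
  | zero => simp [deficit]
  | succ n ih =>
    rw [Function.iterate_succ_apply', deficit_succ, ← ih]
    ring

end Deficit

section ZeroRho

variable {γ α : ℝ} {σ : St} {n : ℕ}

lemma alphaOf_zero (γ α : ℝ) (σ : St) : alphaOf γ 0 α σ = α := by simp [alphaOf]

lemma lam_zero_natCast_add_sub (γ : ℝ) (n i : ℕ) :
    lam γ 0 (((n + i : ℕ) : ℤ) - n) = (1 + γ) ^ i - 1 := by
  simp [lam]

lemma one_add_sq_sub_one (γ : ℝ) : (1 + γ) ^ 2 - 1 = γ * (2 + γ) := by ring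

lemma one_add_cube_sub_one (γ : ℝ) : (1 + γ) ^ 3 - 1 = γ * (3 + 3 * γ + γ ^ 2) := by ring

lemma step_y_self (hm : mOf γ 0 α σ = n) (hn : n ≤ kstarOf σ) :
    (step γ 0 α σ).y n = max (σ.y n) 0 := by
  rw [step_y_of_le hn, hm]; simp [lam]

lemma step_y_add (hm : mOf γ 0 α σ = n) {i : ℕ} (hi : n + i ≤ kstarOf σ) :
    (step γ 0 α σ).y (n + i) =
      max (σ.y (n + i) + DeltaOf γ 0 α σ * ((1 + γ) ^ i - 1) / γ) 0 := by
  rw [step_y_of_le hi, hm, lam_zero_natCast_add_sub]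

lemma deltaOf_add (hm : mOf γ 0 α σ = n) {i : ℕ} (hi : n + i ≠ kstarOf σ) :
    deltaOf γ 0 α σ (n + i) = (α - σ.y (n + i)) * γ / ((1 + γ) ^ i - 1) := by
  rw [deltaOf, if_neg hi, hm, lam_zero_natCast_add_sub, alphaOf_zero, sub_zero]

lemma deltaOf_kstarOf (hm : mOf γ 0 α σ = n) {i : ℕ} (hk : kstarOf σ = n + i) :
    deltaOf γ 0 α σ (n + i) = (1 - σ.y (n + i)) * γ / ((1 + γ) ^ i - 1) := by
  rw [deltaOf, if_pos hk.symm, hk, hm, lam_zero_natCast_add_sub]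

end ZeroRho

/-- Entries below `n` are left free: they no longer influence the dynamics once `m ≥ n`. -/
def IsWindow (α : ℝ) (σ : St) (n : ℕ) (a b : ℝ) : Prop :=
  σ.y n = α ∧ σ.y (n + 1) = a ∧ σ.y (n + 2) = b ∧ ∀ j, n + 2 < j → σ.y j = 0

namespace IsWindow

variable {γ α a b : ℝ} {σ : St} {n : ℕ}

lemma bddAbove (h : IsWindow α σ n a b) : BddAbove {j | 0 < σ.y j} :=
  ⟨n + 2, fun j hj => not_lt.1 fun hlt => hj.ne' (h.2.2.2 j hlt)⟩

lemma mOf_eq (h : IsWindow α σ n a b) (hα : 0 < α) (ha : a < α) (hb : b < α) :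
    mOf γ 0 α σ = n := by
  refine SelectiveSweeps.mOf_eq (by rw [alphaOf_zero, h.1]) fun j hj => ?_
  rw [alphaOf_zero]
  rcases (show j = n + 1 ∨ j = n + 2 ∨ n + 2 < j by omega) with rfl | rfl | hj
  · rw [h.2.1]; exact ha.ne
  · rw [h.2.2.1]; exact hb.ne
  · rw [h.2.2.2 j hj]; exact hα.ne

lemma step_of_zero (hγ : γ ≠ 0) (hα : 1 < α) (h : IsWindow α σ n a 0) (ha0 : 0 < a)
    (ha1 : a < 1) : DeltaOf γ 0 α σ = 1 - a ∧ IsWindow α (step γ 0 α σ) n 1 0 := by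
  have hm := h.mOf_eq (γ := γ) (by linarith) (by linarith) (by linarith)
  have hk : kstarOf σ = n + 1 := by
    refine kstarOf_eq_of_lt_one (h.2.1 ▸ ha0) (h.2.1 ▸ ha1) fun j hj => ?_
    rcases (show j = n + 2 ∨ n + 2 < j by omega) with rfl | hj
    exacts [h.2.2.1, h.2.2.2 j hj]
  have hδ : deltaOf γ 0 α σ (n + 1) = 1 - a := by
    rw [deltaOf_kstarOf hm hk, h.2.1, pow_one, add_sub_cancel_left, mul_div_cancel_right₀ _ hγ]
  have hΔ : DeltaOf γ 0 α σ = 1 - a := by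
    refine DeltaOf_eq (by rw [hm, hk]; simp) hδ fun j hj => ?_
    rw [hm, hk, Set.mem_Ioc] at hj
    obtain rfl : j = n + 1 := by omega
    exact hδ.ge
  refine ⟨hΔ, ?_, ?_, ?_, fun j hj => step_y_of_lt (by omega)⟩
  · rw [step_y_self hm (by omega), h.1]; exact max_eq_left (by linarith)
  · rw [step_y_add hm hk.ge, hΔ, h.2.1]
    rw [pow_one, add_sub_cancel_left, mul_div_cancel_right₀ _ hγ, add_sub_cancel]
    exact max_eq_left zero_le_one
  · exact step_y_of_lt (by omega)

lemma step_of_deficit (hγ : 0 < γ) {w : ℝ}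
    (h : IsWindow α σ n (1 + w * (2 + γ)) (w * (3 + 3 * γ + γ ^ 2))) (hw : 0 ≤ w)
    (hw3 : w * (3 + 3 * γ + γ ^ 2) < 1)
    (hle : (1 - w * (3 + 3 * γ + γ ^ 2)) / (2 + γ) ≤ α - (1 + w * (2 + γ))) :
    DeltaOf γ 0 α σ = (1 - w * (3 + 3 * γ + γ ^ 2)) / (2 + γ) ∧
      IsWindow α (step γ 0 α σ) n
        (1 + w * (2 + γ) + (1 - w * (3 + 3 * γ + γ ^ 2)) / (2 + γ)) 1 := by
  have hpos : 0 < (1 - w * (3 + 3 * γ + γ ^ 2)) / (2 + γ) := div_pos (by linarith) (by linarith)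
  have hw2 : 0 ≤ w * (2 + γ) := mul_nonneg hw (by linarith)
  have hm := h.mOf_eq (γ := γ) (by linarith) (by linarith) (by linarith)
  have hk : kstarOf σ = n + 2 := by
    rcases hw.eq_or_lt with rfl | hw
    · refine kstarOf_eq_succ (by rw [h.2.1]; ring) fun j hj => ?_
      rcases (show j = n + 2 ∨ n + 2 < j by omega) with rfl | hj
      · rw [h.2.2.1]; ring
      · exact h.2.2.2 j hj
    · exact kstarOf_eq_of_lt_one (by rw [h.2.2.1]; positivity) (h.2.2.1 ▸ hw3) h.2.2.2
  have hδ : deltaOf γ 0 α σ (n + 2) = (1 - w * (3 + 3 * γ + γ ^ 2)) / (2 + γ) := by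
    rw [deltaOf_kstarOf hm hk, h.2.2.1, one_add_sq_sub_one]
    field_simp
  have hΔ : DeltaOf γ 0 α σ = (1 - w * (3 + 3 * γ + γ ^ 2)) / (2 + γ) := by
    refine DeltaOf_eq (by rw [hm, hk]; simp) hδ fun j hj => ?_
    rw [hm, hk, Set.mem_Ioc] at hj
    rcases (show j = n + 1 ∨ j = n + 2 by omega) with rfl | rfl
    · rw [deltaOf_add hm (by omega), h.2.1, pow_one, add_sub_cancel_left,
        mul_div_cancel_right₀ _ hγ.ne']
      exact hle
    · exact hδ.ge
  refine ⟨hΔ, ?_, ?_, ?_, fun j hj => step_y_of_lt (by omega)⟩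
  · rw [step_y_self hm (by omega), h.1]; exact max_eq_left (by linarith)
  · rw [step_y_add hm (by omega), hΔ, h.2.1, pow_one, add_sub_cancel_left,
      mul_div_cancel_right₀ _ hγ.ne']
    exact max_eq_left (by linarith)
  · rw [step_y_add hm hk.ge, hΔ, h.2.2.1, one_add_sq_sub_one]
    rw [show w * (3 + 3 * γ + γ ^ 2) + (1 - w * (3 + 3 * γ + γ ^ 2)) / (2 + γ) *
        (γ * (2 + γ)) / γ = 1 by field_simp; ring]
    exact max_eq_left zero_le_one

lemma step_of_one (hγ : 0 < γ) (hα : 1 < α) {u : ℝ} (h : IsWindow α σ n (α - u) 1)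
    (hu : 0 < u) (hu2 : u ≤ (α - 1) / (2 + γ)) (hu3 : u ≤ 1 / (3 + 3 * γ + γ ^ 2)) :
    DeltaOf γ 0 α σ = u ∧
      IsWindow α (step γ 0 α σ) (n + 1) (1 + u * (2 + γ)) (u * (3 + 3 * γ + γ ^ 2)) := by
  have hm := h.mOf_eq (γ := γ) (by linarith) (by linarith) hα
  have hk : kstarOf σ = n + 3 := kstarOf_eq_succ h.2.2.1 h.2.2.2
  have hδ : deltaOf γ 0 α σ (n + 1) = u := by
    rw [deltaOf_add hm (by omega), h.2.1, pow_one, add_sub_cancel_left,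
      mul_div_cancel_right₀ _ hγ.ne', sub_sub_cancel]
  have hΔ : DeltaOf γ 0 α σ = u := by
    refine DeltaOf_eq (by rw [hm, hk]; simp) hδ fun j hj => ?_
    rw [hm, hk, Set.mem_Ioc] at hj
    rcases (show j = n + 1 ∨ j = n + 2 ∨ j = n + 3 by omega) with rfl | rfl | rfl
    · exact hδ.ge
    · rw [deltaOf_add hm (by omega), h.2.2.1, one_add_sq_sub_one]
      convert hu2 using 1
      field_simp
    · rw [deltaOf_kstarOf hm hk, h.2.2.2 _ (by omega), sub_zero, one_add_cube_sub_one]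
      convert hu3 using 1
      field_simp
  refine ⟨hΔ, ?_, ?_, ?_, fun j hj => step_y_of_lt (by omega)⟩
  · rw [step_y_add hm (by omega), hΔ, h.2.1, pow_one, add_sub_cancel_left,
      mul_div_cancel_right₀ _ hγ.ne', sub_add_cancel]
    exact max_eq_left (by linarith)
  · change (step γ 0 α σ).y (n + 2) = _
    rw [step_y_add hm (by omega), hΔ, h.2.2.1, one_add_sq_sub_one]
    rw [show 1 + u * (γ * (2 + γ)) / γ = 1 + u * (2 + γ) by field_simp]
    exact max_eq_left (by positivity)
  · change (step γ 0 α σ).y (n + 3) = _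
    rw [step_y_add hm hk.ge, hΔ, h.2.2.2 _ (by omega), one_add_cube_sub_one, zero_add]
    rw [show u * (γ * (3 + 3 * γ + γ ^ 2)) / γ = u * (3 + 3 * γ + γ ^ 2) by field_simp]
    exact max_eq_left (by positivity)

end IsWindow

lemma isWindow_state_zero {γ ρ α : ℝ} (h1 : 1 < α) (h2 : α < 2) :
    IsWindow α (state γ ρ α 0) 0 (α - 1) 0 := by
  refine ⟨?_, ?_, ?_, fun j hj => max_eq_right ?_⟩
  · change max (α - ((0 : ℕ) : ℝ)) 0 = α
    simp only [Nat.cast_zero, sub_zero]; exact max_eq_left (by linarith)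
  · change max (α - ((0 + 1 : ℕ) : ℝ)) 0 = α - 1
    simp only [zero_add, Nat.cast_one]; exact max_eq_left (by linarith)
  · change max (α - ((0 + 2 : ℕ) : ℝ)) 0 = 0
    simp only [zero_add, Nat.cast_ofNat]; exact max_eq_right (by linarith)
  · have : (3 : ℝ) ≤ j := by exact_mod_cast hj
    linarith

section RegimeTwo

variable {γ α : ℝ} (hγ : 0 < γ) (hα1 : 1 + 1 / (2 + γ) < α)
  (hα2 : α < 1 + 1 / (2 + γ) + 1 / (3 + 3 * γ + γ ^ 2))

local notation "w" => deficit (α - (1 + 1 / (2 + γ))) ((1 + γ) / (2 + γ))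

include hγ in
lemma one_add_div_two_add_lt_one : (1 + γ) / (2 + γ) < 1 := by
  rw [div_lt_one (by linarith)]; linarith

include hγ hα1 in
lemma one_lt_of_regime : 1 < α := by
  have : 0 < 1 / (2 + γ) := by positivity
  linarith

include hγ hα2 in
lemma lt_two_of_regime : α < 2 := by
  have h2 : 1 / (2 + γ) < 1 / 2 := by gcongr; linarith
  have h3 : 1 / (3 + 3 * γ + γ ^ 2) < 1 / 2 := by gcongr; nlinarith
  linarith

include hγ hα1 in
lemma deficit_mem (n : ℕ) : w n ∈ Set.Icc 0 (α - (1 + 1 / (2 + γ))) :=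
  deficit_mem_Icc (by linarith) (by positivity) (one_add_div_two_add_lt_one hγ).le n

include hγ hα1 hα2 in
lemma deficit_mul_lt_one (n : ℕ) : w n * (3 + 3 * γ + γ ^ 2) < 1 := by
  have h3 : 0 < 3 + 3 * γ + γ ^ 2 := by positivity
  have := (deficit_mem hγ hα1 n).2
  rw [← lt_div_iff₀ h3]
  linarith

include hγ hα2 in
lemma one_add_mul_sub_one_lt_one : (1 + γ) * (α - 1) < 1 := by
  have h2 : 0 < 2 + γ := by linarith
  have h3 : 0 < 3 + 3 * γ + γ ^ 2 := by positivity
  have : (1 + γ) * (1 / (2 + γ) + 1 / (3 + 3 * γ + γ ^ 2)) < 1 := by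
    rw [div_add_div _ _ h2.ne' h3.ne', mul_div_assoc', div_lt_one (by positivity)]
    nlinarith
  nlinarith

include hγ hα1 hα2 in
lemma step_odd {n : ℕ}
    (h : IsWindow α (state γ 0 α (2 * n + 1)) n (1 + w n * (2 + γ)) (w n * (3 + 3 * γ + γ ^ 2))) :
    DeltaOf γ 0 α (state γ 0 α (2 * n + 1)) = (1 - w n * (3 + 3 * γ + γ ^ 2)) / (2 + γ) ∧
      IsWindow α (state γ 0 α (2 * n + 2)) n (α - w (n + 1)) 1 := by
  have hw := deficit_mem hγ hα1 n
  have hd : (α - (1 + 1 / (2 + γ))) * (2 + γ) = (α - 1) * (2 + γ) - 1 := by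
    field_simp; ring
  have key := h.step_of_deficit hγ hw.1 (deficit_mul_lt_one hγ hα1 hα2 n) (by
    rw [div_le_iff₀ (by linarith)]
    nlinarith [hw.1, hw.2])
  refine ⟨key.1, ?_⟩
  rw [state_succ]
  convert key.2 using 2
  rw [deficit_succ]
  field_simp
  ring

include hγ hα1 hα2 in
lemma step_even {n : ℕ} (h : IsWindow α (state γ 0 α (2 * n + 2)) n (α - w (n + 1)) 1) :
    DeltaOf γ 0 α (state γ 0 α (2 * n + 2)) = w (n + 1) ∧
      IsWindow α (state γ 0 α (2 * (n + 1) + 1)) (n + 1)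
        (1 + w (n + 1) * (2 + γ)) (w (n + 1) * (3 + 3 * γ + γ ^ 2)) := by
  have hw := deficit_mem hγ hα1 (n + 1)
  have hpos := deficit_succ_pos (sub_pos.2 hα1) (by positivity) (one_add_div_two_add_lt_one hγ) n
  have key := h.step_of_one hγ (one_lt_of_regime hγ hα1) hpos (by
      rw [le_div_iff₀ (by linarith)]
      have hα := one_add_mul_sub_one_lt_one hγ hα2
      have hw2 : w (n + 1) * (2 + γ) ≤ (α - (1 + 1 / (2 + γ))) * (2 + γ) :=
        mul_le_mul_of_nonneg_right hw.2 (by linarith)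
      rw [sub_mul, add_mul, one_div_mul_cancel (by linarith)] at hw2
      nlinarith)
    (by
      rw [le_div_iff₀ (by positivity)]
      linarith [deficit_mul_lt_one hγ hα1 hα2 (n + 1)])
  exact ⟨key.1, by rw [show 2 * (n + 1) + 1 = 2 * n + 2 + 1 by ring, state_succ]; exact key.2⟩

include hγ hα1 hα2 in
lemma step_initial :
    DeltaOf γ 0 α (state γ 0 α 0) = 2 - α ∧ IsWindow α (state γ 0 α 1) 0 1 0 := by
  have h1 := one_lt_of_regime hγ hα1
  have h2 := lt_two_of_regime hγ hα2
  have key := (isWindow_state_zero (γ := γ) (ρ := 0) h1 h2).step_of_zero hγ.ne' h1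
    (by linarith) (by linarith)
  rw [state_succ]
  exact ⟨by rw [key.1]; ring, key.2⟩

include hγ hα1 hα2 in
lemma isWindow_state_odd (n : ℕ) :
    IsWindow α (state γ 0 α (2 * n + 1)) n (1 + w n * (2 + γ)) (w n * (3 + 3 * γ + γ ^ 2)) := by
  induction n with
  | zero => simpa [deficit] using (step_initial hγ hα1 hα2).2
  | succ n ih => exact (step_even hγ hα1 hα2 (step_odd hγ hα1 hα2 ih).2).2

include hγ hα1 hα2 in
lemma isWindow_state_even (n : ℕ) :
    IsWindow α (state γ 0 α (2 * n + 2)) n (α - w (n + 1)) 1 :=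
  (step_odd hγ hα1 hα2 (isWindow_state_odd hγ hα1 hα2 n)).2

include hγ hα1 hα2 in
lemma DeltaOf_state_odd (n : ℕ) :
    DeltaOf γ 0 α (state γ 0 α (2 * n + 1)) = (1 - w n * (3 + 3 * γ + γ ^ 2)) / (2 + γ) :=
  (step_odd hγ hα1 hα2 (isWindow_state_odd hγ hα1 hα2 n)).1

include hγ hα1 hα2 in
lemma DeltaOf_state_even (n : ℕ) : DeltaOf γ 0 α (state γ 0 α (2 * n + 2)) = w (n + 1) :=
  (step_even hγ hα1 hα2 (isWindow_state_even hγ hα1 hα2 n)).1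

include hγ hα1 hα2 in
lemma strictMono_state_s : StrictMono fun i => (state γ 0 α i).s := by
  refine strictMono_nat_of_lt_succ fun i => ?_
  rw [state_s_succ, lt_add_iff_pos_right]
  obtain ⟨k, rfl | rfl⟩ := Nat.even_or_odd' i
  · cases k with
    | zero => rw [(step_initial hγ hα1 hα2).1]; linarith [lt_two_of_regime hγ hα2]
    | succ k =>
      rw [show 2 * (k + 1) = 2 * k + 2 by ring, DeltaOf_state_even hγ hα1 hα2 k]
      exact deficit_succ_pos (sub_pos.2 hα1) (by positivity) (one_add_div_two_add_lt_one hγ) k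
  · rw [DeltaOf_state_odd hγ hα1 hα2 k]
    exact div_pos (by linarith [deficit_mul_lt_one hγ hα1 hα2 k]) (by linarith)

include hγ hα1 hα2 in
lemma state_y_lt_one {i j : ℕ} (hij : i / 2 + 2 ≤ j) : (state γ 0 α i).y j < 1 := by
  obtain ⟨k, rfl | rfl⟩ := Nat.even_or_odd' i
  · cases k with
    | zero =>
      have h := isWindow_state_zero (γ := γ) (ρ := 0) (one_lt_of_regime hγ hα1)
        (lt_two_of_regime hγ hα2)
      rcases (show j = 2 ∨ 2 < j by omega) with rfl | hj
      · rw [h.2.2.1]; exact one_pos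
      · rw [h.2.2.2 j hj]; exact one_pos
    | succ k =>
      rw [show 2 * (k + 1) = 2 * k + 2 by ring,
        (isWindow_state_even hγ hα1 hα2 k).2.2.2 j (by omega)]
      exact one_pos
  · have h := isWindow_state_odd hγ hα1 hα2 k
    rcases (show j = k + 2 ∨ k + 2 < j by omega) with rfl | hj
    · rw [h.2.2.1]; exact deficit_mul_lt_one hγ hα1 hα2 k
    · rw [h.2.2.2 j hj]; exact one_pos

include hγ hα1 hα2 in
lemma tHit_one : tHit γ 0 α 1 = 2 - α := by
  have h := step_initial hγ hα1 hα2
  rw [tHit_eq (N := 1) (strictMono_state_s hγ hα1 hα2) h.2.bddAbove (fun n hn => ?_) h.2.2.1,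
    state_s_succ, h.1, state_s_zero, zero_add]
  obtain rfl : n = 0 := by omega
  have h2 := lt_two_of_regime hγ hα2
  rw [(isWindow_state_zero (one_lt_of_regime hγ hα1) h2).2.1]
  linarith

include hγ hα1 hα2 in
lemma tHit_add_two (n : ℕ) : tHit γ 0 α (n + 2) = (state γ 0 α (2 * n + 2)).s :=
  tHit_eq (strictMono_state_s hγ hα1 hα2) (isWindow_state_even hγ hα1 hα2 n).bddAbove
    (fun _ hi => state_y_lt_one hγ hα1 hα2 (by omega)) (isWindow_state_even hγ hα1 hα2 n).2.2.1

include hγ hα1 hα2 in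
lemma tHit_two_sub_tHit_one : tHit γ 0 α 2 - tHit γ 0 α 1 = 1 / (2 + γ) := by
  have h1 := tHit_add_two hγ hα1 hα2 0
  have h2 := DeltaOf_state_odd hγ hα1 hα2 0
  rw [tHit_one hγ hα1 hα2, h1, state_s_succ, h2, state_s_succ, (step_initial hγ hα1 hα2).1,
    state_s_zero]
  simp [deficit]

include hγ hα1 hα2 in
lemma tHit_add_three_sub (n : ℕ) :
    tHit γ 0 α (n + 3) - tHit γ 0 α (n + 2) =
      w (n + 1) + (1 - (3 + 3 * γ + γ ^ 2) * w (n + 1)) / (2 + γ) := by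
  have h := tHit_add_two hγ hα1 hα2 (n + 1)
  rw [h, tHit_add_two hγ hα1 hα2 n, state_s_succ, DeltaOf_state_odd hγ hα1 hα2 (n + 1),
    show 2 * (n + 1) + 1 = 2 * n + 2 + 1 by ring, state_s_succ, DeltaOf_state_even hγ hα1 hα2 n]
  ring

include hγ hα1 hα2 in
lemma tendsto_tHit_succ_sub :
    Filter.Tendsto (fun j => tHit γ 0 α (j + 1) - tHit γ 0 α j) Filter.atTop
      (nhds ((α - (1 + 1 / (2 + γ))) / (1 + (1 + γ) / (2 + γ)) +
        (1 - (3 + 3 * γ + γ ^ 2) * ((α - (1 + 1 / (2 + γ))) / (1 + (1 + γ) / (2 + γ)))) /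
          (2 + γ))) := by
  have hℓ : |(1 + γ) / (2 + γ)| < 1 := by
    rw [abs_of_nonneg (by positivity)]; exact one_add_div_two_add_lt_one hγ
  have hw := (Filter.tendsto_add_atTop_iff_nat 1).2
    (tendsto_deficit (d := α - (1 + 1 / (2 + γ))) hℓ)
  refine (Filter.tendsto_add_atTop_iff_nat 2).1 ?_
  exact (hw.add ((tendsto_const_nhds.sub (hw.const_mul _)).div_const _)).congr fun n =>
    (tHit_add_three_sub hγ hα1 hα2 n).symm

end RegimeTwo

lemma div_gam_two {γ : ℝ} (hγ : 0 < γ) : γ / gam γ 2 = 1 / (2 + γ) := by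
  rw [gam, zpow_ofNat, one_add_sq_sub_one]
  field_simp

lemma div_gam_three {γ : ℝ} (hγ : 0 < γ) : γ / gam γ 3 = 1 / (3 + 3 * γ + γ ^ 2) := by
  rw [gam, zpow_ofNat, one_add_cube_sub_one]
  field_simp

/-- Regime 2 increments.  Suppose `ρ = 0` and `r_2 < α < r_3`, where
`r_2 = 1 + γ/γ_2` and `r_3 = r_2 + γ/γ_3`.  Let `ℓ = (1+γ)/(2+γ)` and `f(x) = r_2 + ℓ(α−x)`.
Then `t_1 = 2 − α`, `t_2 − t_1 = γ/γ_2`, for every `j ≥ 3`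
`t_j − t_{j−1} = (α − f^{j−3}(r_2)) + (1 − (3+3γ+γ²)(α − f^{j−3}(r_2)))/(2+γ)`, and as
`j → ∞` these increments converge to
`β_∞ = (α − r*) + (1 − (3+3γ+γ²)(α − r*))/(2+γ)` with `r* = (r_2 + ℓα)/(1+ℓ)`. -/
theorem regime_two_increments (γ α : ℝ) (hγ : 0 < γ)
    (hα1 : 1 + γ / gam γ 2 < α) (hα2 : α < 1 + γ / gam γ 2 + γ / gam γ 3) :
    tHit γ 0 α 1 = 2 - α ∧
    tHit γ 0 α 2 - tHit γ 0 α 1 = γ / gam γ 2 ∧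
    (∀ j : ℕ, 3 ≤ j →
      tHit γ 0 α j - tHit γ 0 α (j - 1) =
        (α - (fun x : ℝ => (1 + γ / gam γ 2) + (1 + γ) / (2 + γ) * (α - x))^[j - 3]
            (1 + γ / gam γ 2)) +
        (1 - (3 + 3 * γ + γ ^ 2) *
            (α - (fun x : ℝ => (1 + γ / gam γ 2) + (1 + γ) / (2 + γ) * (α - x))^[j - 3]
              (1 + γ / gam γ 2))) / (2 + γ)) ∧
    Filter.Tendsto (fun j : ℕ => tHit γ 0 α (j + 1) - tHit γ 0 α j) Filter.atTop
      (nhds ((α - ((1 + γ / gam γ 2) + (1 + γ) / (2 + γ) * α) / (1 + (1 + γ) / (2 + γ))) +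
        (1 - (3 + 3 * γ + γ ^ 2) *
            (α - ((1 + γ / gam γ 2) + (1 + γ) / (2 + γ) * α) / (1 + (1 + γ) / (2 + γ)))) /
          (2 + γ))) := by
  rw [div_gam_two hγ] at hα1 hα2 ⊢
  rw [div_gam_three hγ] at hα2
  refine ⟨tHit_one hγ hα1 hα2, tHit_two_sub_tHit_one hγ hα1 hα2, fun j hj => ?_, ?_⟩
  · obtain ⟨n, rfl⟩ : ∃ n, j = n + 3 := ⟨j - 3, by omega⟩
    rw [Nat.add_sub_cancel, show n + 3 - 1 = n + 2 by omega, sub_iterate_eq_deficit,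
      tHit_add_three_sub hγ hα1 hα2]
  · have hfix : α - (1 + 1 / (2 + γ) + (1 + γ) / (2 + γ) * α) / (1 + (1 + γ) / (2 + γ)) =
        (α - (1 + 1 / (2 + γ))) / (1 + (1 + γ) / (2 + γ)) := by
      field_simp; ring
    rw [hfix]
    exact tendsto_tHit_succ_sub hγ hα1 hα2

end

end SelectiveSweeps
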